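/- Let i be in {0,...,m-1} and let (i±2,i±1) denote either (i-2,i-1) or (i+2,i+1). For every u,u' in A_{i±2} ∪ B_{i±1}, the sets N(u) ∩ B_i and N(u') ∩ B_i are comparable under inclusion. Moreover, if u in A_{i±2} and u' in B_{i±1}, then N(u) ∩ B_i ⊆ N(u') ∩ B_i. -/

import Mathlib

open SimpleGraph

/-- `c` is a hole (induced cycle on at least 5 vertices) in `G`:
the images of consecutive indices are adjacent, and these are the only adjacencies. -/
def IsHoleEmb {V : Type*} (G : SimpleGraph V) (n : ℕ) (c : ZMod n → V) : Prop :=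
  5 ≤ n ∧ Function.Injective c ∧
    ∀ i j : ZMod n, G.Adj (c i) (c j) ↔ (j = i + 1 ∨ i = j + 1)

/-- The triangle `K₃`. -/
def graphK3 : SimpleGraph (Fin 3) := ⊤

/-- `T₂`: the star `K_{1,3}` with every edge subdivided once. -/
def graphT2 : SimpleGraph (Fin 7) :=
  SimpleGraph.fromRel (fun i j =>
    (i, j) ∈ [((0 : Fin 7), (1 : Fin 7)), (0, 2), (0, 3), (1, 4), (2, 5), (3, 6)])

/-- `X₂`: a 4-cycle `0 1 2 3` with pendant vertices `4, 5, 6` attached at `0, 1, 2`. -/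
def graphX2 : SimpleGraph (Fin 7) :=
  SimpleGraph.fromRel (fun i j =>
    (i, j) ∈ [((0 : Fin 7), (1 : Fin 7)), (1, 2), (2, 3), (3, 0), (0, 4), (1, 5), (2, 6)])

/-- `X₃`: a path `0 1 2 3 4`, a vertex `5` adjacent to `0, 2, 4`, and a pendant `6` at `5`. -/
def graphX3 : SimpleGraph (Fin 7) :=
  SimpleGraph.fromRel (fun i j =>
    (i, j) ∈ [((0 : Fin 7), (1 : Fin 7)), (1, 2), (2, 3), (3, 4), (5, 0), (5, 2), (5, 4), (5, 6)])

/-- The cycle `C_n` on `ZMod n`. -/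
def cycleG (n : ℕ) : SimpleGraph (ZMod n) :=
  SimpleGraph.fromRel (fun i j => j = i + 1)

/-- `G` contains an induced copy of `H`. -/
def ContainsInduced {W V : Type*} (H : SimpleGraph W) (G : SimpleGraph V) : Prop :=
  Nonempty (H ↪g G)

/-- An almost bipartite permutation graph: no induced `K₃`, `T₂`, `X₂`, `X₃`,
nor `C_k` for `k ∈ {5,…,9}`. -/
def AlmostBPG {V : Type*} (G : SimpleGraph V) : Prop :=
  ¬ ContainsInduced graphK3 G ∧ ¬ ContainsInduced graphT2 G ∧
    ¬ ContainsInduced graphX2 G ∧ ¬ ContainsInduced graphX3 G ∧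
    ∀ k : ℕ, 5 ≤ k → k ≤ 9 → ¬ ContainsInduced (cycleG k) G

/-- `c` is a shortest hole in `G`. -/
def ShortestHole {V : Type*} (G : SimpleGraph V) (m : ℕ) (c : ZMod m → V) : Prop :=
  IsHoleEmb G m c ∧ ∀ (n : ℕ) (c' : ZMod n → V), IsHoleEmb G n c' → m ≤ n

/-- `A_i = {v : N(v) ∩ C = {c_{i-1}, c_{i+1}}}`. -/
def Ai {V : Type*} (G : SimpleGraph V) (m : ℕ) (c : ZMod m → V) (i : ZMod m) : Set V :=
  {v | G.neighborSet v ∩ Set.range c = {c (i - 1), c (i + 1)}}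

/-- `B_i = {v : N(v) ∩ C = {c_i}}`. -/
def Bi {V : Type*} (G : SimpleGraph V) (m : ℕ) (c : ZMod m → V) (i : ZMod m) : Set V :=
  {v | G.neighborSet v ∩ Set.range c = {c i}}

/-- `A[i,j] = A_i ∪ B_{i+1} ∪ A_{i+2} ∪ …` for integers `i ≤ j`. -/
def Ablk {V : Type*} (G : SimpleGraph V) (m : ℕ) (c : ZMod m → V) (i j : ℤ) : Set V :=
  {v | ∃ k : ℤ, i ≤ k ∧ k ≤ j ∧
    ((Even (k - i) ∧ v ∈ Ai G m c (k : ZMod m)) ∨ (Odd (k - i) ∧ v ∈ Bi G m c (k : ZMod m)))}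

/-- `B[i,j] = B_i ∪ A_{i+1} ∪ B_{i+2} ∪ …` for integers `i ≤ j`. -/
def Bblk {V : Type*} (G : SimpleGraph V) (m : ℕ) (c : ZMod m → V) (i j : ℤ) : Set V :=
  {v | ∃ k : ℤ, i ≤ k ∧ k ≤ j ∧
    ((Even (k - i) ∧ v ∈ Bi G m c (k : ZMod m)) ∨ (Odd (k - i) ∧ v ∈ Ai G m c (k : ZMod m)))}

/-- `V[i,j] = A[i,j] ∪ B[i,j]`. -/
def Vblk {V : Type*} (G : SimpleGraph V) (m : ℕ) (c : ZMod m → V) (i j : ℤ) : Set V :=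
  Ablk G m c i j ∪ Bblk G m c i j

/-- The relation `<_{A_i}`. -/
def ltA {V : Type*} (G : SimpleGraph V) (m : ℕ) (c : ZMod m → V) (i : ZMod m)
    (u u' : V) : Prop :=
  (∃ w ∈ Bi G m c (i - 2) ∪ Ai G m c (i - 1), G.Adj w u ∧ ¬ G.Adj w u') ∨
  (∃ w ∈ Ai G m c (i + 1) ∪ Bi G m c (i + 2), G.Adj w u' ∧ ¬ G.Adj w u)

/-- The relation `<_{B_i}`. -/
def ltB {V : Type*} (G : SimpleGraph V) (m : ℕ) (c : ZMod m → V) (i : ZMod m)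
    (w w' : V) : Prop :=
  (∃ u ∈ Ai G m c (i - 2) ∪ Bi G m c (i - 1), G.Adj u w ∧ ¬ G.Adj u w') ∨
  (∃ u ∈ Bi G m c (i + 1) ∪ Ai G m c (i + 2), G.Adj u w' ∧ ¬ G.Adj u w)

/-- `r` is a strict linear order on the set `S`. -/
def IsStrictLinearOrderOn {V : Type*} (S : Set V) (r : V → V → Prop) : Prop :=
  (∀ a ∈ S, ¬ r a a) ∧
    (∀ a ∈ S, ∀ b ∈ S, ∀ d ∈ S, r a b → r b d → r a d) ∧
    (∀ a ∈ S, ∀ b ∈ S, a ≠ b → r a b ∨ r b a)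

/-- `L` extends `r` on the set `S`. -/
def ExtendsOn {V : Type*} (S : Set V) (r L : V → V → Prop) : Prop :=
  ∀ a ∈ S, ∀ b ∈ S, r a b → L a b

/-- `v` is the maximum of `(S, L)`. -/
def IsMaxOf {V : Type*} (S : Set V) (L : V → V → Prop) (v : V) : Prop :=
  v ∈ S ∧ ∀ z ∈ S, z ≠ v → L z v

/-- `v` is the minimum of `(S, L)`. -/
def IsMinOf {V : Type*} (S : Set V) (L : V → V → Prop) (v : V) : Prop :=
  v ∈ S ∧ ∀ z ∈ S, z ≠ v → L v z

/-- `v, v'` belong to `S`, `L v v'`, and they are consecutive in `(S, L)`. -/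
def ConsecIn {V : Type*} (S : Set V) (L : V → V → Prop) (v v' : V) : Prop :=
  v ∈ S ∧ v' ∈ S ∧ L v v' ∧ ¬ ∃ z ∈ S, L v z ∧ L z v'

/-- The relation `≺` built from the chosen linear orders `LA i` on `A_i` and `LB i` on `B_i`. -/
def precRel {V : Type*} (G : SimpleGraph V) (m : ℕ) (c : ZMod m → V)
    (LA LB : ZMod m → V → V → Prop) (v v' : V) : Prop :=
  ∃ i : ZMod m,
    ConsecIn (Ai G m c i) (LA i) v v' ∨
    ConsecIn (Bi G m c i) (LB i) v v' ∨
    (IsMaxOf (Ai G m c i) (LA i) v ∧ IsMinOf (Bi G m c (i + 1)) (LB (i + 1)) v') ∨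
    (IsMaxOf (Bi G m c i) (LB i) v ∧ IsMinOf (Ai G m c (i + 1)) (LA (i + 1)) v')

/-- `<_{V'}`: the transitive closure of `≺` restricted to `V'`. -/
def ltOn {V : Type*} (G : SimpleGraph V) (m : ℕ) (c : ZMod m → V)
    (LA LB : ZMod m → V → V → Prop) (V' : Set V) : V → V → Prop :=
  Relation.TransGen (fun a b => a ∈ V' ∧ b ∈ V' ∧ precRel G m c LA LB a b)

/-- The relation `<_cl`. -/
def ltCl {V : Type*} (G : SimpleGraph V) (m : ℕ) (c : ZMod m → V)
    (LA LB : ZMod m → V → V → Prop) (v v' : V) : Prop :=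
  ∃ i : ℕ, i < m ∧
    ((v ∈ Ablk G m c ((i : ℤ) - 2) ((i : ℤ) + 2) ∧ v' ∈ Ablk G m c ((i : ℤ) - 2) ((i : ℤ) + 2) ∧
        ltOn G m c LA LB (Ablk G m c ((i : ℤ) - 2) ((i : ℤ) + 2)) v v') ∨
      (v ∈ Bblk G m c ((i : ℤ) - 2) ((i : ℤ) + 2) ∧ v' ∈ Bblk G m c ((i : ℤ) - 2) ((i : ℤ) + 2) ∧
        ltOn G m c LA LB (Bblk G m c ((i : ℤ) - 2) ((i : ℤ) + 2)) v v'))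

/-- `r` is a transitive orientation of `G`. -/
def IsTransOrient {V : Type*} (G : SimpleGraph V) (r : V → V → Prop) : Prop :=
  (∀ v, ¬ r v v) ∧ (∀ a b d, r a b → r b d → r a d) ∧
    ∀ u v, u ≠ v → ((r u v ∨ r v u) ↔ G.Adj u v)

/-- A permutation graph: both `G` and its complement admit transitive orientations. -/
def IsPermGraph {V : Type*} (G : SimpleGraph V) : Prop :=
  (∃ r, IsTransOrient G r) ∧ ∃ r, IsTransOrient Gᶜ r

/-- A bipartite permutation graph. -/
def IsBPG {V : Type*} (G : SimpleGraph V) : Prop :=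
  G.Colorable 2 ∧ IsPermGraph G

/-- `X` is a hole cut of `G`: `G - X` is a bipartite permutation graph. -/
def IsHoleCut {V : Type*} (G : SimpleGraph V) (X : Set V) : Prop :=
  IsBPG (G.induce Xᶜ)

/-- The adjacency property: for every `u ∈ U`, `N(u)` consists of vertices
consecutive in `(W, r)`. -/
def AdjProperty {V : Type*} (G : SimpleGraph V) (U W : Set V) (r : V → V → Prop) : Prop :=
  ∀ u ∈ U, ∀ w ∈ W, ∀ w' ∈ W, ∀ w'' ∈ W,
    r w w' → r w' w'' → G.Adj u w → G.Adj u w'' → G.Adj u w'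

/-- The enclosure property: for `u, u' ∈ U` with `N(u) ⊆ N(u')`, the set `N(u') \ N(u)`
consists of vertices consecutive in `(W, r)`. -/
def EncProperty {V : Type*} (G : SimpleGraph V) (U W : Set V) (r : V → V → Prop) : Prop :=
  ∀ u ∈ U, ∀ u' ∈ U, G.neighborSet u ∩ W ⊆ G.neighborSet u' ∩ W →
    ∀ w ∈ W, ∀ w' ∈ W, ∀ w'' ∈ W, r w w' → r w' w'' →
      (G.Adj u' w ∧ ¬ G.Adj u w) → (G.Adj u' w'' ∧ ¬ G.Adj u w'') →
        (G.Adj u' w' ∧ ¬ G.Adj u w')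

/-- `(U, rU)` and `(W, rW)` form a strong ordering of `U ∪ W`. -/
def StrongOrdering {V : Type*} (G : SimpleGraph V) (U W : Set V)
    (rU rW : V → V → Prop) : Prop :=
  ∀ u ∈ U, ∀ u' ∈ U, ∀ w ∈ W, ∀ w' ∈ W,
    G.Adj u w' → G.Adj u' w → rU u u' → rW w w' → G.Adj u w ∧ G.Adj u' w'

/-- `S` induces in `G` one of the graphs `K₃, T₂, X₂, X₃, C₅, …, C₉`. -/
def IsForbiddenSet {V : Type*} (G : SimpleGraph V) (S : Set V) : Prop :=
  Nonempty (graphK3 ≃g G.induce S) ∨ Nonempty (graphT2 ≃g G.induce S) ∨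
    Nonempty (graphX2 ≃g G.induce S) ∨ Nonempty (graphX3 ≃g G.induce S) ∨
    ∃ k : ℕ, 5 ≤ k ∧ k ≤ 9 ∧ Nonempty (cycleG k ≃g G.induce S)

/-!
Reflecting the hole if necessary, take `(p, q) = (i + 2ε, i + ε)` with `ε = ±1` and look at the
five consecutive hole vertices `d₀, …, d₄ = c (i - ε), …, c (i + 3ε)`, which induce a path.
On this path a vertex of `A_p` sees exactly `d₂, d₄`, a vertex of `B_q` exactly `d₂`, and a
vertex of `B_i` exactly `d₁`. If `u ∈ A_p` sees some `w ∈ B_i` that `u' ∈ B_q` misses, then the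
4-cycle `d₁ d₂ u w` with pendants `d₀, u', d₄` is an induced `X₂`. If `u, u' ∈ A_p ∪ B_q` have
private neighbours `w, w' ∈ B_i`, then the path `w u d₂ u' w'` together with `d₁` (adjacent to
`w, d₂, w'`) and its pendant `d₀` is an induced `X₃`. The remaining non-adjacencies
(`u ≁ u'`, `w ≁ w'`) come from triangle-freeness.
-/

instance : DecidableRel graphK3.Adj := fun a b =>
  decidable_of_iff (a ≠ b) (by simp [graphK3])

instance : DecidableRel graphX2.Adj := fun a b =>
  decidable_of_iff _ (SimpleGraph.fromRel_adj _ a b).symm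

instance : DecidableRel graphX3.Adj := fun a b =>
  decidable_of_iff _ (SimpleGraph.fromRel_adj _ a b).symm

section InducedSubgraphs

variable {V W : Type*} {G : SimpleGraph V}

/-- Injectivity of `f` is automatic because no two vertices of `H` are twins. -/
theorem containsInduced_of_adj_iff {H : SimpleGraph W} (f : W → V)
    (hadj : ∀ a b, H.Adj a b ↔ G.Adj (f a) (f b))
    (hsep : ∀ a b, a ≠ b → ∃ x, ¬(H.Adj a x ↔ H.Adj b x)) :
    ContainsInduced H G := by
  refine ⟨⟨⟨f, fun a b hab => by_contra fun hne => ?_⟩, (hadj _ _).symm⟩⟩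
  obtain ⟨x, hx⟩ := hsep a b hne
  exact hx (by rw [hadj, hadj, hab])

theorem not_adj_of_adj_of_adj (hK3 : ¬ContainsInduced graphK3 G) {a b d : V}
    (hab : G.Adj a b) (hbd : G.Adj b d) : ¬G.Adj a d := fun had =>
  hK3 <| containsInduced_of_adj_iff ![a, b, d]
    (by
      intro x y
      fin_cases x <;> fin_cases y <;>
        simp [graphK3, hab, hbd, had, hab.symm, hbd.symm, had.symm])
    (by decide)

theorem adj_of_adj_of_X2_free (hK3 : ¬ContainsInduced graphK3 G)
    (hX2 : ¬ContainsInduced graphX2 G) (d : pathGraph 5 ↪g G) {u u' w : V}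
    (hu : ∀ k, G.Adj u (d k) ↔ (pathGraph 5).Adj 3 k) (hu' : ∀ k, G.Adj u' (d k) ↔ k = 2)
    (hw : ∀ k, G.Adj w (d k) ↔ k = 1) (huw : G.Adj u w) : G.Adj u' w := by
  by_contra hu'w
  have huu' : ¬G.Adj u u' :=
    not_adj_of_adj_of_adj hK3 ((hu 2).2 (by simp [pathGraph_adj])) ((hu' 2).2 rfl).symm
  refine hX2 (containsInduced_of_adj_iff ![d 1, d 2, u, w, d 0, u', d 4] ?_ (by decide))
  intro a b
  fin_cases a <;> fin_cases b <;>
    simp [graphX2, pathGraph_adj, hu, hu', hw, fun k => G.adj_comm (d k) u,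
      fun k => G.adj_comm (d k) u', fun k => G.adj_comm (d k) w, huw, huw.symm, hu'w, huu',
      mt G.adj_symm hu'w, mt G.adj_symm huu']

theorem adj_or_adj_of_X3_free (hK3 : ¬ContainsInduced graphK3 G)
    (hX3 : ¬ContainsInduced graphX3 G) (d : pathGraph 5 ↪g G) {u u' w w' : V}
    (hu : ∀ k ≤ 2, G.Adj u (d k) ↔ k = 2) (hu' : ∀ k ≤ 2, G.Adj u' (d k) ↔ k = 2)
    (hw : ∀ k ≤ 2, G.Adj w (d k) ↔ k = 1) (hw' : ∀ k ≤ 2, G.Adj w' (d k) ↔ k = 1)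
    (huw : G.Adj u w) (hu'w' : G.Adj u' w') : G.Adj u w' ∨ G.Adj u' w := by
  by_contra! ⟨huw', hu'w⟩
  have huu' : ¬G.Adj u u' :=
    not_adj_of_adj_of_adj hK3 ((hu 2 le_rfl).2 rfl) ((hu' 2 le_rfl).2 rfl).symm
  have hww' : ¬G.Adj w w' :=
    not_adj_of_adj_of_adj hK3 ((hw 1 (by decide)).2 rfl) ((hw' 1 (by decide)).2 rfl).symm
  refine hX3 (containsInduced_of_adj_iff ![w, u, d 2, u', w', d 1, d 0] ?_ (by decide))
  intro a b
  fin_cases a <;> fin_cases b <;>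
    simp [graphX3, pathGraph_adj, hu, hu', hw, hw', fun k => G.adj_comm (d k) u,
      fun k => G.adj_comm (d k) u', fun k => G.adj_comm (d k) w, fun k => G.adj_comm (d k) w',
      huw, huw.symm, hu'w', hu'w'.symm, huw', hu'w, huu', hww', mt G.adj_symm huw',
      mt G.adj_symm hu'w, mt G.adj_symm huu', mt G.adj_symm hww']

theorem neighborSet_inter_subset_or_subset {u u' : V} {S : Set V}
    (h : ∀ w ∈ S, ∀ w' ∈ S, G.Adj u w → G.Adj u' w' → G.Adj u w' ∨ G.Adj u' w) :
    G.neighborSet u ∩ S ⊆ G.neighborSet u' ∩ S ∨ G.neighborSet u' ∩ S ⊆ G.neighborSet u ∩ S := by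
  by_contra! ⟨hu, hu'⟩
  obtain ⟨w, ⟨huw, hw⟩, hu'w⟩ := Set.not_subset.1 hu
  obtain ⟨w', ⟨hu'w', hw'⟩, huw'⟩ := Set.not_subset.1 hu'
  rcases h w hw w' hw' huw hu'w' with h | h
  exacts [huw' ⟨h, hw'⟩, hu'w ⟨h, hw⟩]

end InducedSubgraphs

theorem ZMod.natCast_sub_natCast_eq_one_iff {m a b : ℕ} (hb : b < m) (ha : a + 1 < m) :
    (b : ZMod m) - a = 1 ↔ b = a + 1 := by
  rw [sub_eq_iff_eq_add, add_comm, ← Nat.cast_add_one]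
  exact (CharP.natCast_injOn_Iio (ZMod m) m).eq_iff hb ha

section Hole

variable {V : Type*} {G : SimpleGraph V} {m : ℕ} {c : ZMod m → V}

theorem adj_iff_of_mem_Bi {p : ZMod m} {u : V} (hu : u ∈ Bi G m c p) (j : ZMod m) :
    G.Adj u (c j) ↔ c j = c p := by
  have hmem : G.Adj u (c j) ↔ c j ∈ G.neighborSet u ∩ Set.range c :=
    ⟨fun h => ⟨h, j, rfl⟩, fun h => h.1⟩
  rw [hmem, hu.out, Set.mem_singleton_iff]

namespace IsHoleEmb

theorem adj_iff_sub_eq_one (hC : IsHoleEmb G m c) (x y : ZMod m) :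
    G.Adj (c x) (c y) ↔ y - x = 1 ∨ x - y = 1 := by
  rw [hC.2.2, sub_eq_iff_eq_add', sub_eq_iff_eq_add']

theorem adj_iff_of_mem_Ai (hC : IsHoleEmb G m c) {p : ZMod m} {u : V} (hu : u ∈ Ai G m c p)
    (j : ZMod m) : G.Adj u (c j) ↔ G.Adj (c p) (c j) := by
  have hmem : G.Adj u (c j) ↔ c j ∈ G.neighborSet u ∩ Set.range c :=
    ⟨fun h => ⟨h, j, rfl⟩, fun h => h.1⟩
  rw [hmem, hu.out, Set.mem_insert_iff, Set.mem_singleton_iff, hC.2.1.eq_iff, hC.2.1.eq_iff,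
    hC.2.2, eq_sub_iff_add_eq, eq_comm (a := j + 1), or_comm]

def pathEmbedding (hC : IsHoleEmb G m c) (n : ℕ) (hn : n < m) (i ε : ZMod m)
    (hε : ε = 1 ∨ ε = -1) : pathGraph n ↪g G where
  toFun k := c (i + ε * (k : ℕ))
  inj' a b hab := by
    have hε2 : ε * ε = 1 := by rcases hε with rfl | rfl <;> simp
    have hab' : ((a : ℕ) : ZMod m) = (b : ℕ) := by
      simpa [← mul_assoc, hε2] using congrArg (ε * ·) (add_left_cancel (hC.2.1 hab))
    exact Fin.ext <|
      (CharP.natCast_injOn_Iio (ZMod m) m).eq_iff (by simp; omega) (by simp; omega) |>.1 hab'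
  map_rel_iff' {a b} := by
    change G.Adj (c _) (c _) ↔ _
    have key : ∀ a b : Fin n, ((b : ℕ) : ZMod m) - a = 1 ↔ (a : ℕ) + 1 = b := fun a b =>
      (ZMod.natCast_sub_natCast_eq_one_iff (by omega) (by omega)).trans eq_comm
    rw [hC.adj_iff_sub_eq_one, add_sub_add_left_eq_sub, add_sub_add_left_eq_sub, ← mul_sub,
      ← mul_sub, pathGraph_adj]
    rcases hε with rfl | rfl
    · simp only [one_mul, key]
    · simp only [neg_one_mul, neg_sub, key]
      exact or_comm

end IsHoleEmb

end Hole

theorem neighborhoods_in_Bi_comparable_general {V : Type*} (G : SimpleGraph V) (hG : AlmostBPG G)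
    (m : ℕ) (c : ZMod m → V) (hm : 10 ≤ m) (hC : ShortestHole G m c)
    (i p q : ZMod m)
    (hpq : (p = i - 2 ∧ q = i - 1) ∨ (p = i + 2 ∧ q = i + 1)) :
    (∀ u ∈ Ai G m c p ∪ Bi G m c q, ∀ u' ∈ Ai G m c p ∪ Bi G m c q,
      G.neighborSet u ∩ Bi G m c i ⊆ G.neighborSet u' ∩ Bi G m c i ∨
        G.neighborSet u' ∩ Bi G m c i ⊆ G.neighborSet u ∩ Bi G m c i) ∧
      ∀ u ∈ Ai G m c p, ∀ u' ∈ Bi G m c q,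
        G.neighborSet u ∩ Bi G m c i ⊆ G.neighborSet u' ∩ Bi G m c i := by
  obtain ⟨hK3, -, hX2, hX3, -⟩ := hG
  obtain ⟨ε, hε, rfl, rfl⟩ : ∃ ε : ZMod m, (ε = 1 ∨ ε = -1) ∧ p = i + 2 * ε ∧ q = i + ε := by
    rcases hpq with ⟨rfl, rfl⟩ | ⟨rfl, rfl⟩
    exacts [⟨-1, Or.inr rfl, by ring, by ring⟩, ⟨1, Or.inl rfl, by ring, by ring⟩]
  set d := hC.1.pathEmbedding 5 (by omega) (i - ε) ε hε
  have hd (k : Fin 5) : c (i - ε + ε * (k : ℕ)) = d k := rfl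
  have hd1 : c i = d 1 := by rw [← hd]; congr 1; simp
  have hd2 : c (i + ε) = d 2 := by rw [← hd]; congr 1; simp; ring
  have hd3 : c (i + 2 * ε) = d 3 := by rw [← hd]; congr 1; simp; ring
  have hA : ∀ u ∈ Ai G m c (i + 2 * ε), ∀ k, G.Adj u (d k) ↔ (pathGraph 5).Adj 3 k := by
    intro u hu k
    rw [← hd, hC.1.adj_iff_of_mem_Ai hu, hd, hd3, d.map_adj_iff]
  have hB (j : Fin 5) (p : ZMod m) (hp : c p = d j) :
      ∀ u ∈ Bi G m c p, ∀ k, G.Adj u (d k) ↔ k = j := by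
    intro u hu k
    rw [← hd, adj_iff_of_mem_Bi hu, hd, hp, d.injective.eq_iff]
  have hU : ∀ u ∈ Ai G m c (i + 2 * ε) ∪ Bi G m c (i + ε), ∀ k ≤ 2, G.Adj u (d k) ↔ k = 2 := by
    rintro u (hu | hu) k hk
    · rw [hA u hu]
      fin_cases k <;> simp [pathGraph_adj] at hk ⊢
    · exact hB 2 _ hd2 u hu k
  have hW : ∀ w ∈ Bi G m c i, ∀ k, G.Adj w (d k) ↔ k = 1 := hB 1 i hd1
  refine ⟨fun u hu u' hu' => neighborSet_inter_subset_or_subset fun w hw w' hw' =>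
      adj_or_adj_of_X3_free hK3 hX3 d (hU u hu) (hU u' hu') (fun k _ => hW w hw k)
        (fun k _ => hW w' hw' k),
    fun u hu u' hu' w ⟨huw, hw⟩ =>
      ⟨adj_of_adj_of_X2_free hK3 hX2 d (hA u hu) (hB 2 _ hd2 u' hu') (hW w hw) huw, hw⟩⟩

theorem neighborhoods_in_Bi_comparable {V : Type*} (G : SimpleGraph V) (hconn : G.Connected) (hG : AlmostBPG G)
    (m : ℕ) (c : ZMod m → V) (hm : 10 ≤ m) (hC : ShortestHole G m c)
    (i p q : ZMod m)
    (hpq : (p = i - 2 ∧ q = i - 1) ∨ (p = i + 2 ∧ q = i + 1)) :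
    (∀ u ∈ Ai G m c p ∪ Bi G m c q, ∀ u' ∈ Ai G m c p ∪ Bi G m c q,
      G.neighborSet u ∩ Bi G m c i ⊆ G.neighborSet u' ∩ Bi G m c i ∨
        G.neighborSet u' ∩ Bi G m c i ⊆ G.neighborSet u ∩ Bi G m c i) ∧
      ∀ u ∈ Ai G m c p, ∀ u' ∈ Bi G m c q,
        G.neighborSet u ∩ Bi G m c i ⊆ G.neighborSet u' ∩ Bi G m c i :=
  neighborhoods_in_Bi_comparable_general G hG m c hm hC i p q hpq
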